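/- arXiv:1906.07424 — 3 statements merged into one kernel-verified Lean document; each statement's English description precedes it below -/
import Mathlib

section
/- Let α ∈ ℝ. For every real z, ∫_{−∞}^{z} (α⁴ t⁴ + 8α² t² + 4) φ(t) / ((2 + α²)(2 + 3α²)) dt = Φ(z) − α² (α² z³ + 3α² z + 8 z) φ(z) / ((2 + α²)(2 + 3α²)). That is, the cumulative distribution function of the symmetric component SCBASN₂(α) is F(z) = Φ(z) − α² z (α² z² + 3α² + 8) φ(z) / ((2 + α²)(2 + 3α²)). -/
open MeasureTheory

/-- The standard normal probability density function. -/
noncomputable def phi (z : ℝ) : ℝ := (Real.sqrt (2 * Real.pi))⁻¹ * Real.exp (-z ^ 2 / 2)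

/-- The standard normal cumulative distribution function. -/
noncomputable def Phi (z : ℝ) : ℝ := ∫ t in Set.Iic z, phi t

lemma gauss_integrable (n : ℕ) :
    Integrable (fun t : ℝ => t ^ n * Real.exp (-t ^ 2 / 2)) := by
  have h := integrable_rpow_mul_exp_neg_mul_sq (by norm_num : (0:ℝ) < 1/2)
    (s := (n : ℝ)) (lt_of_lt_of_le (by norm_num) (Nat.cast_nonneg n))
  refine h.congr (Filter.Eventually.of_forall fun t => ?_)
  simp only [Real.rpow_natCast]
  ring_nf

lemma gauss_tendsto_atTop (n : ℕ) :
    Filter.Tendsto (fun t : ℝ => t ^ n * Real.exp (-t ^ 2 / 2)) Filter.atTop (nhds 0) := by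
  have hg : Filter.Tendsto (fun x : ℝ => Real.exp (-(1/2) * x)) Filter.atTop (nhds 0) := by
    have hm : Filter.Tendsto (fun x : ℝ => -(1/2 : ℝ) * x) Filter.atTop Filter.atBot :=
      Filter.Tendsto.const_mul_atTop_of_neg (by norm_num) Filter.tendsto_id
    exact Real.tendsto_exp_atBot.comp hm
  have h := (rpow_mul_exp_neg_mul_sq_isLittleO_exp_neg (by norm_num : (0:ℝ) < 1/2)
    (n : ℝ)).tendsto_zero_of_tendsto hg
  refine h.congr' ?_
  filter_upwards with t
  simp only [Real.rpow_natCast]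
  ring_nf

lemma gauss_tendsto_atBot (n : ℕ) :
    Filter.Tendsto (fun t : ℝ => t ^ n * Real.exp (-t ^ 2 / 2)) Filter.atBot (nhds 0) := by
  rw [tendsto_zero_iff_norm_tendsto_zero]
  have h := (gauss_tendsto_atTop n).comp Filter.tendsto_neg_atBot_atTop
  rw [tendsto_zero_iff_norm_tendsto_zero] at h
  refine h.congr' ?_
  filter_upwards with t
  simp only [Function.comp_apply, norm_mul, norm_pow, Real.norm_eq_abs, abs_neg, neg_sq]

lemma phi_hasDerivAt (t : ℝ) : HasDerivAt phi (-t * phi t) t := by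
  have h1 : HasDerivAt (fun x : ℝ => -x ^ 2 / 2) (-t) t := by
    have := ((hasDerivAt_pow 2 t).neg).div_const 2
    refine this.congr_deriv ?_
    ring
  have h2 := h1.exp
  have h3 := h2.const_mul ((Real.sqrt (2 * Real.pi))⁻¹)
  unfold phi
  refine h3.congr_deriv ?_
  ring

theorem scbasn2_cdf (α z : ℝ) :
    (∫ t in Set.Iic z, (α ^ 4 * t ^ 4 + 8 * α ^ 2 * t ^ 2 + 4) * phi t /
        ((2 + α ^ 2) * (2 + 3 * α ^ 2))) =
      Phi z - α ^ 2 * (α ^ 2 * z ^ 3 + 3 * α ^ 2 * z + 8 * z) * phi z /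
        ((2 + α ^ 2) * (2 + 3 * α ^ 2)) := by
  set D : ℝ := (2 + α ^ 2) * (2 + 3 * α ^ 2) with hDdef
  have hD : D ≠ 0 := by positivity
  set κ : ℝ := (Real.sqrt (2 * Real.pi))⁻¹ with hκ
  set H : ℝ → ℝ := fun t => -(α ^ 2 * (α ^ 2 * t ^ 3 + 3 * α ^ 2 * t + 8 * t) * phi t) / D
    with hHdef
  set g : ℝ → ℝ := fun t =>
    (α ^ 4 * t ^ 4 + 8 * α ^ 2 * t ^ 2 + 4) * phi t / D - phi t with hgdef
  -- derivative
  have hderiv : ∀ t : ℝ, HasDerivAt H (g t) t := by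
    intro t
    have hpoly : HasDerivAt (fun x : ℝ => α ^ 2 * (α ^ 2 * x ^ 3 + 3 * α ^ 2 * x + 8 * x))
        (α ^ 2 * (α ^ 2 * (3 * t ^ 2) + 3 * α ^ 2 + 8)) t := by
      have h3 := (hasDerivAt_pow 3 t).const_mul (α ^ 2)
      have h1a := (hasDerivAt_id t).const_mul (3 * α ^ 2)
      have h1b := (hasDerivAt_id t).const_mul (8 : ℝ)
      have := (((h3.add h1a).add h1b).const_mul (α ^ 2))
      refine this.congr_deriv ?_
      push_cast; ring
    have := ((hpoly.mul (phi_hasDerivAt t)).neg).div_const D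
    refine this.congr_deriv ?_
    rw [hgdef]
    simp only
    field_simp
    ring
  -- integrability of g
  have hgint : Integrable g := by
    have h4 := ((gauss_integrable 4).const_mul (α ^ 4 * κ / D))
    have h2 := ((gauss_integrable 2).const_mul (8 * α ^ 2 * κ / D))
    have h0 := ((gauss_integrable 0).const_mul ((4 - D) * κ / D))
    have := (h4.add h2).add h0
    refine this.congr (Filter.Eventually.of_forall fun t => ?_)
    rw [hgdef]
    simp only [phi, ← hκ, pow_zero, one_mul, Pi.add_apply]
    field_simp
    ring
  -- tendsto of H at -infty
  have htend : Filter.Tendsto H Filter.atBot (nhds 0) := by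
    have h3 := (gauss_tendsto_atBot 3).const_mul (-(α ^ 4) * κ / D)
    have h1 := (gauss_tendsto_atBot 1).const_mul (-(α ^ 2 * (3 * α ^ 2 + 8)) * κ / D)
    have := h3.add h1
    rw [mul_zero, mul_zero, add_zero] at this
    refine this.congr fun t => ?_
    rw [hHdef]
    simp only [phi, ← hκ]
    field_simp
    ring
  have key := integral_Iic_of_hasDerivAt_of_tendsto' (a := z)
    (fun t _ => hderiv t) hgint.integrableOn htend
  have hphiint : Integrable phi := by
    have := (gauss_integrable 0).const_mul κ
    refine this.congr (Filter.Eventually.of_forall fun t => ?_)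
    simp only [phi, ← hκ, pow_zero, one_mul]
  have hsplit : (∫ t in Set.Iic z, (α ^ 4 * t ^ 4 + 8 * α ^ 2 * t ^ 2 + 4) * phi t / D)
      = (∫ t in Set.Iic z, g t) + ∫ t in Set.Iic z, phi t := by
    rw [← integral_add hgint.integrableOn hphiint.integrableOn]
    congr 1
    funext t
    rw [hgdef]
    ring
  rw [hsplit, key, Phi]
  rw [hHdef]
  ring
end

section
/- Let α ∈ ℝ, let f(z; α) = ((1 − α z)² + 1)² φ(z) / ((2 + α²)(2 + 3α²)), and let μ(α) = −4α/(2 + α²) be its mean. Then the squared skewness satisfies (∫_ℝ (z − μ(α))³ f(z; α) dz)² / (∫_ℝ (z − μ(α))² f(z; α) dz)³ = 64 α⁶ (2 + 3α²)(4 + 15α⁴)² / (8 + 20α² + 6α⁴ + 15α⁶)³. -/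
open MeasureTheory

open Real Filter in
private lemma integrable_pow_gauss (n : ℕ) :
    Integrable (fun z : ℝ => z ^ n * Real.exp (-z ^ 2 / 2)) := by
  have h := integrable_rpow_mul_exp_neg_mul_sq (b := (1/2 : ℝ)) (by norm_num)
      (s := (n : ℝ)) (lt_of_lt_of_le neg_one_lt_zero (Nat.cast_nonneg n))
  refine h.congr (Eventually.of_forall fun z => ?_)
  show z ^ ((n : ℝ)) * Real.exp (-(1/2 : ℝ) * z ^ 2) = z ^ n * Real.exp (-z ^ 2 / 2)
  rw [Real.rpow_natCast, show -(1/2 : ℝ) * z ^ 2 = -z ^ 2 / 2 by ring]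

private lemma hexp (z : ℝ) :
    HasDerivAt (fun z : ℝ => Real.exp (-z ^ 2 / 2)) (-z * Real.exp (-z ^ 2 / 2)) z := by
  have h1 : HasDerivAt (fun z : ℝ => -z ^ 2 / 2) (-z) z := by
    have := (hasDerivAt_pow 2 z).neg.div_const 2
    refine this.congr_deriv ?_
    simp
    ring
  have := (Real.hasDerivAt_exp (-z ^ 2 / 2)).comp z h1
  exact this.congr_deriv (by ring)

private lemma gauss_rec (n : ℕ) :
    ∫ z : ℝ, z ^ (n + 2) * Real.exp (-z ^ 2 / 2)
      = (n + 1 : ℝ) * ∫ z : ℝ, z ^ n * Real.exp (-z ^ 2 / 2) := by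
  have hd : ∀ z : ℝ, HasDerivAt (fun z : ℝ => z ^ (n + 1) * Real.exp (-z ^ 2 / 2))
      ((n + 1 : ℝ) * (z ^ n * Real.exp (-z ^ 2 / 2)) - z ^ (n + 2) * Real.exp (-z ^ 2 / 2)) z := by
    intro z
    have h1 : HasDerivAt (fun z : ℝ => z ^ (n + 1)) ((n + 1 : ℝ) * z ^ n) z := by
      have := hasDerivAt_pow (n + 1) z
      simpa using this
    have := h1.mul (hexp z)
    refine this.congr_deriv ?_
    ring
  have hint : Integrable (fun z : ℝ =>
      (n + 1 : ℝ) * (z ^ n * Real.exp (-z ^ 2 / 2)) - z ^ (n + 2) * Real.exp (-z ^ 2 / 2)) :=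
    ((integrable_pow_gauss n).const_mul _).sub (integrable_pow_gauss (n + 2))
  have h0 := integral_eq_zero_of_hasDerivAt_of_integrable hd hint (integrable_pow_gauss (n + 1))
  rw [integral_sub ((integrable_pow_gauss n).const_mul _) (integrable_pow_gauss (n + 2)),
    integral_const_mul] at h0
  linarith

open Real in
private lemma sqrt2pi_pos : 0 < Real.sqrt (2 * Real.pi) :=
  Real.sqrt_pos.mpr (by positivity)

private lemma g0 : ∫ z : ℝ, Real.exp (-z ^ 2 / 2) = Real.sqrt (2 * Real.pi) := by
  have : ∀ z : ℝ, Real.exp (-z ^ 2 / 2) = Real.exp (-(1/2 : ℝ) * z ^ 2) := by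
    intro z; rw [show -(1/2 : ℝ) * z ^ 2 = -z ^ 2 / 2 by ring]
  simp_rw [this]
  rw [integral_gaussian, show Real.pi / (1/2 : ℝ) = 2 * Real.pi by ring]

private lemma g1 : ∫ z : ℝ, z * Real.exp (-z ^ 2 / 2) = 0 := by
  have hd : ∀ z : ℝ, HasDerivAt (fun z : ℝ => -Real.exp (-z ^ 2 / 2))
      (z * Real.exp (-z ^ 2 / 2)) z := by
    intro z
    have := (hexp z).neg
    refine this.congr_deriv ?_
    ring
  have hexpint : Integrable (fun z : ℝ => Real.exp (-z ^ 2 / 2)) :=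
    (integrable_pow_gauss 0).congr (Filter.Eventually.of_forall fun z => by simp)
  have hint : Integrable (fun z : ℝ => z * Real.exp (-z ^ 2 / 2)) :=
    (integrable_pow_gauss 1).congr (Filter.Eventually.of_forall fun z => by simp)
  exact integral_eq_zero_of_hasDerivAt_of_integrable hd hint hexpint.neg

private lemma g2 : ∫ z : ℝ, z ^ 2 * Real.exp (-z ^ 2 / 2) = Real.sqrt (2 * Real.pi) := by
  have h := gauss_rec 0
  norm_num at h
  exact h.trans g0

private lemma g3 : ∫ z : ℝ, z ^ 3 * Real.exp (-z ^ 2 / 2) = 0 := by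
  have h := gauss_rec 1
  norm_num at h
  rw [h, g1, mul_zero]

private lemma g4 : ∫ z : ℝ, z ^ 4 * Real.exp (-z ^ 2 / 2) = 3 * Real.sqrt (2 * Real.pi) := by
  have h := gauss_rec 2
  norm_num at h
  rw [h, g2]

private lemma g5 : ∫ z : ℝ, z ^ 5 * Real.exp (-z ^ 2 / 2) = 0 := by
  have h := gauss_rec 3
  norm_num at h
  rw [h, g3, mul_zero]

private lemma g6 : ∫ z : ℝ, z ^ 6 * Real.exp (-z ^ 2 / 2) = 15 * Real.sqrt (2 * Real.pi) := by
  have h := gauss_rec 4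
  norm_num at h
  rw [h, g4]
  ring

private lemma g7 : ∫ z : ℝ, z ^ 7 * Real.exp (-z ^ 2 / 2) = 0 := by
  have h := gauss_rec 5
  norm_num at h
  rw [h, g5, mul_zero]

private lemma Ihelp (k : ℕ) :
    ∫ z : ℝ, z ^ k * phi z
      = (Real.sqrt (2 * Real.pi))⁻¹ * ∫ z : ℝ, z ^ k * Real.exp (-z ^ 2 / 2) := by
  rw [← integral_const_mul]
  exact integral_congr_ae (Filter.Eventually.of_forall fun z => by simp only [phi]; ring)

private lemma mphi0 : ∫ z : ℝ, z ^ 0 * phi z = 1 := by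
  rw [Ihelp 0]
  simp_rw [pow_zero, one_mul]
  rw [g0, inv_mul_cancel₀ sqrt2pi_pos.ne']

private lemma mphi1 : ∫ z : ℝ, z ^ 1 * phi z = 0 := by
  rw [Ihelp 1]
  simp_rw [pow_one]
  rw [g1, mul_zero]

private lemma mphi2 : ∫ z : ℝ, z ^ 2 * phi z = 1 := by
  rw [Ihelp 2, g2, inv_mul_cancel₀ sqrt2pi_pos.ne']

private lemma mphi3 : ∫ z : ℝ, z ^ 3 * phi z = 0 := by
  rw [Ihelp 3, g3, mul_zero]

private lemma mphi4 : ∫ z : ℝ, z ^ 4 * phi z = 3 := by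
  rw [Ihelp 4, g4]
  field_simp

private lemma mphi5 : ∫ z : ℝ, z ^ 5 * phi z = 0 := by
  rw [Ihelp 5, g5, mul_zero]

private lemma mphi6 : ∫ z : ℝ, z ^ 6 * phi z = 15 := by
  rw [Ihelp 6, g6]
  field_simp

private lemma mphi7 : ∫ z : ℝ, z ^ 7 * phi z = 0 := by
  rw [Ihelp 7, g7, mul_zero]

private lemma integrable_pow_mul_phi (k : ℕ) :
    Integrable (fun z : ℝ => z ^ k * phi z) := by
  have := (integrable_pow_gauss k).const_mul ((Real.sqrt (2 * Real.pi))⁻¹)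
  exact this.congr (Filter.Eventually.of_forall fun z => by simp only [phi]; ring)

private lemma integral_poly_mul_phi (c0 c1 c2 c3 c4 c5 c6 c7 : ℝ) :
    ∫ z : ℝ, (c0 * (z ^ 0 * phi z) + c1 * (z ^ 1 * phi z) + c2 * (z ^ 2 * phi z)
      + c3 * (z ^ 3 * phi z) + c4 * (z ^ 4 * phi z) + c5 * (z ^ 5 * phi z)
      + c6 * (z ^ 6 * phi z) + c7 * (z ^ 7 * phi z))
      = c0 + c2 + 3 * c4 + 15 * c6 := by
  have I : ∀ (c : ℝ) (k : ℕ), Integrable (fun z : ℝ => c * (z ^ k * phi z)) :=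
    fun c k => (integrable_pow_mul_phi k).const_mul c
  have A1 : Integrable (fun z : ℝ => c0 * (z ^ 0 * phi z) + c1 * (z ^ 1 * phi z)) :=
    (I c0 0).add (I c1 1)
  have A2 : Integrable (fun z : ℝ => c0 * (z ^ 0 * phi z) + c1 * (z ^ 1 * phi z)
      + c2 * (z ^ 2 * phi z)) := A1.add (I c2 2)
  have A3 : Integrable (fun z : ℝ => c0 * (z ^ 0 * phi z) + c1 * (z ^ 1 * phi z)
      + c2 * (z ^ 2 * phi z) + c3 * (z ^ 3 * phi z)) := A2.add (I c3 3)
  have A4 : Integrable (fun z : ℝ => c0 * (z ^ 0 * phi z) + c1 * (z ^ 1 * phi z)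
      + c2 * (z ^ 2 * phi z) + c3 * (z ^ 3 * phi z) + c4 * (z ^ 4 * phi z)) := A3.add (I c4 4)
  have A5 : Integrable (fun z : ℝ => c0 * (z ^ 0 * phi z) + c1 * (z ^ 1 * phi z)
      + c2 * (z ^ 2 * phi z) + c3 * (z ^ 3 * phi z) + c4 * (z ^ 4 * phi z)
      + c5 * (z ^ 5 * phi z)) := A4.add (I c5 5)
  have A6 : Integrable (fun z : ℝ => c0 * (z ^ 0 * phi z) + c1 * (z ^ 1 * phi z)
      + c2 * (z ^ 2 * phi z) + c3 * (z ^ 3 * phi z) + c4 * (z ^ 4 * phi z)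
      + c5 * (z ^ 5 * phi z) + c6 * (z ^ 6 * phi z)) := A5.add (I c6 6)
  rw [integral_add A6 (I c7 7), integral_add A5 (I c6 6), integral_add A4 (I c5 5),
    integral_add A3 (I c4 4), integral_add A2 (I c3 3), integral_add A1 (I c2 2),
    integral_add (I c0 0) (I c1 1)]
  simp only [integral_const_mul, mphi0, mphi1, mphi2, mphi3, mphi4, mphi5, mphi6, mphi7]
  ring

private lemma L3 (a m : ℝ) :
    (∫ z : ℝ, (z - m) ^ 3 * ((1 - a * z) ^ 2 + 1) ^ 2 * phi z)
      = -12*m - 4*m^3 - 24*a - 24*a*m^2 - 72*a^2*m - 8*a^2*m^3 - 60*a^3 - 36*a^3*m^2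
        - 45*a^4*m - 3*a^4*m^3 := by
  have h : (fun z : ℝ => (z - m) ^ 3 * ((1 - a * z) ^ 2 + 1) ^ 2 * phi z)
      = fun z : ℝ => (-4*m^3) * (z ^ 0 * phi z) + (12*m^2 + 8*a*m^3) * (z ^ 1 * phi z)
        + (-12*m - 24*a*m^2 - 8*a^2*m^3) * (z ^ 2 * phi z)
        + (4 + 24*a*m + 24*a^2*m^2 + 4*a^3*m^3) * (z ^ 3 * phi z)
        + (-8*a - 24*a^2*m - 12*a^3*m^2 - a^4*m^3) * (z ^ 4 * phi z)
        + (8*a^2 + 12*a^3*m + 3*a^4*m^2) * (z ^ 5 * phi z)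
        + (-4*a^3 - 3*a^4*m) * (z ^ 6 * phi z) + (a^4) * (z ^ 7 * phi z) := by
    funext z; ring
  rw [h, integral_poly_mul_phi]
  ring

private lemma L2 (a m : ℝ) :
    (∫ z : ℝ, (z - m) ^ 2 * ((1 - a * z) ^ 2 + 1) ^ 2 * phi z)
      = 4 + 4*m^2 + 16*a*m + 24*a^2 + 8*a^2*m^2 + 24*a^3*m + 15*a^4 + 3*a^4*m^2 := by
  have h : (fun z : ℝ => (z - m) ^ 2 * ((1 - a * z) ^ 2 + 1) ^ 2 * phi z)
      = fun z : ℝ => (4*m^2) * (z ^ 0 * phi z) + (-8*m - 8*a*m^2) * (z ^ 1 * phi z)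
        + (4 + 16*a*m + 8*a^2*m^2) * (z ^ 2 * phi z)
        + (-8*a - 16*a^2*m - 4*a^3*m^2) * (z ^ 3 * phi z)
        + (8*a^2 + 8*a^3*m + a^4*m^2) * (z ^ 4 * phi z)
        + (-4*a^3 - 2*a^4*m) * (z ^ 5 * phi z)
        + (a^4) * (z ^ 6 * phi z) + (0 : ℝ) * (z ^ 7 * phi z) := by
    funext z; ring
  rw [h, integral_poly_mul_phi]
  ring

theorem basn2_skewness (α : ℝ) :
    (∫ z : ℝ, (z - (-4 * α / (2 + α ^ 2))) ^ 3 *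
        (((1 - α * z) ^ 2 + 1) ^ 2 * phi z / ((2 + α ^ 2) * (2 + 3 * α ^ 2)))) ^ 2 /
      (∫ z : ℝ, (z - (-4 * α / (2 + α ^ 2))) ^ 2 *
        (((1 - α * z) ^ 2 + 1) ^ 2 * phi z / ((2 + α ^ 2) * (2 + 3 * α ^ 2)))) ^ 3 =
      64 * α ^ 6 * (2 + 3 * α ^ 2) * (4 + 15 * α ^ 4) ^ 2 /
        (8 + 20 * α ^ 2 + 6 * α ^ 4 + 15 * α ^ 6) ^ 3 := by
  have h1 : (2 : ℝ) + α ^ 2 ≠ 0 := by positivity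
  have h2 : (2 : ℝ) + 3 * α ^ 2 ≠ 0 := by positivity
  have e3 : (∫ z : ℝ, (z - (-4 * α / (2 + α ^ 2))) ^ 3 *
        (((1 - α * z) ^ 2 + 1) ^ 2 * phi z / ((2 + α ^ 2) * (2 + 3 * α ^ 2))))
      = (∫ z : ℝ, (z - (-4 * α / (2 + α ^ 2))) ^ 3 * ((1 - α * z) ^ 2 + 1) ^ 2 * phi z)
        * ((2 + α ^ 2) * (2 + 3 * α ^ 2))⁻¹ := by
    rw [← integral_mul_const]
    exact integral_congr_ae (Filter.Eventually.of_forall fun z => by ring)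
  have e2 : (∫ z : ℝ, (z - (-4 * α / (2 + α ^ 2))) ^ 2 *
        (((1 - α * z) ^ 2 + 1) ^ 2 * phi z / ((2 + α ^ 2) * (2 + 3 * α ^ 2))))
      = (∫ z : ℝ, (z - (-4 * α / (2 + α ^ 2))) ^ 2 * ((1 - α * z) ^ 2 + 1) ^ 2 * phi z)
        * ((2 + α ^ 2) * (2 + 3 * α ^ 2))⁻¹ := by
    rw [← integral_mul_const]
    exact integral_congr_ae (Filter.Eventually.of_forall fun z => by ring)
  rw [e3, e2, L3 α (-4 * α / (2 + α ^ 2)), L2 α (-4 * α / (2 + α ^ 2))]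
  set m : ℝ := -4 * α / (2 + α ^ 2) with hm
  have v3 : (-12*m - 4*m^3 - 24*α - 24*α*m^2 - 72*α^2*m - 8*α^2*m^3 - 60*α^3 - 36*α^3*m^2
        - 45*α^4*m - 3*α^4*m^3) * ((2 + α ^ 2) * (2 + 3 * α ^ 2))⁻¹
      = 8 * α^3 * (4 + 15*α^4) / ((2 + α^2)^3 * (2 + 3*α^2)) := by
    rw [hm]
    field_simp
    ring
  have v2 : (4 + 4*m^2 + 16*α*m + 24*α^2 + 8*α^2*m^2 + 24*α^3*m + 15*α^4 + 3*α^4*m^2)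
        * ((2 + α ^ 2) * (2 + 3 * α ^ 2))⁻¹
      = (8 + 20*α^2 + 6*α^4 + 15*α^6) / ((2 + α^2)^2 * (2 + 3*α^2)) := by
    rw [hm]
    field_simp
    ring
  rw [v3, v2]
  rw [div_pow, div_pow, div_div_div_eq]
  rw [div_eq_div_iff (by positivity) (by positivity)]
  ring
end

section
/- Let n be a positive even natural number and consider the generalized bimodal normal density g(z) = zⁿ φ(z) / C (with C the normalizing constant). The derivative of z ↦ zⁿ φ(z) vanishes exactly on the set {−√n, 0, √n}, and z ↦ zⁿ φ(z) attains its global maximum over ℝ exactly at the two points z = √n and z = −√n; hence the density has exactly two modes. -/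
open MeasureTheory

lemma phi_pos (z : ℝ) : 0 < phi z := by
  have h : (0:ℝ) < 2 * Real.pi := by positivity
  unfold phi
  positivity

lemma phi_hasDeriv (z : ℝ) : HasDerivAt phi (-z * phi z) z := by
  unfold phi
  have h1 : HasDerivAt (fun w : ℝ => -w ^ 2 / 2) (-z) z := by
    have := ((hasDerivAt_pow 2 z).neg).div_const 2
    refine this.congr_deriv ?_
    simp
    ring
  have h2 := (h1.exp).const_mul ((Real.sqrt (2 * Real.pi))⁻¹)
  refine h2.congr_deriv ?_
  ring

lemma key (m : ℕ) (hm : 0 < m) {t : ℝ} (ht : 0 ≤ t) (hne : t ≠ 2*m) :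
    t ^ m * Real.exp (-t/2) < (2*(m:ℝ)) ^ m * Real.exp (-(2*(m:ℝ))/2) := by
  have hmR : (0:ℝ) < m := by exact_mod_cast hm
  have hn : (0:ℝ) < 2*m := by linarith
  rcases eq_or_lt_of_le ht with h0 | h0
  · rw [← h0]
    rw [zero_pow hm.ne', zero_mul]
    positivity
  · have hlog : Real.log (t / (2*m)) < t/(2*m) - 1 := by
      apply Real.log_lt_sub_one_of_pos (by positivity)
      intro h
      apply hne
      field_simp at h
      linarith
    rw [Real.log_div h0.ne' hn.ne'] at hlog
    have h3 := mul_lt_mul_of_pos_left hlog hmR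
    have e1 : (m:ℝ) * (t/(2*m) - 1) = t/2 - m := by field_simp
    have h2 : (m:ℝ) * Real.log t + (-t/2) < (m:ℝ) * Real.log (2*m) + (-(2*m)/2) := by
      rw [mul_sub] at h3
      rw [e1] at h3
      linarith
    have lhs_eq : t ^ m * Real.exp (-t/2) = Real.exp ((m:ℝ) * Real.log t + (-t/2)) := by
      rw [Real.exp_add, Real.exp_nat_mul, Real.exp_log h0]
    have rhs_eq : (2*(m:ℝ)) ^ m * Real.exp (-(2*(m:ℝ))/2)
        = Real.exp ((m:ℝ) * Real.log (2*m) + (-(2*m)/2)) := by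
      rw [Real.exp_add, Real.exp_nat_mul, Real.exp_log hn]
    rw [lhs_eq, rhs_eq]
    exact Real.exp_lt_exp.mpr h2

lemma f_eq (m : ℕ) (w : ℝ) :
    w^(2*m) * phi w = (Real.sqrt (2*Real.pi))⁻¹ * ((w^2)^m * Real.exp (-(w^2)/2)) := by
  unfold phi
  rw [← pow_mul]
  ring

theorem bn_two_modes (n : ℕ) (hn : 0 < n) (hne : Even n) :
    {z : ℝ | deriv (fun w : ℝ => w ^ n * phi w) z = 0} =
      {-Real.sqrt n, 0, Real.sqrt n} ∧
    {z : ℝ | ∀ w : ℝ, w ^ n * phi w ≤ z ^ n * phi z} =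
      {Real.sqrt n, -Real.sqrt n} := by
  obtain ⟨m, hm2⟩ := hne
  have hnm : n = 2 * m := by omega
  have hm : 0 < m := by omega
  subst hnm
  have hmR : (0:ℝ) < m := by exact_mod_cast hm
  have hnR : (0:ℝ) < (2*m : ℕ) := by push_cast; linarith
  have hsq : (Real.sqrt (2*m : ℕ))^2 = (2*m : ℕ) := Real.sq_sqrt hnR.le
  have hc : (0:ℝ) < (Real.sqrt (2*Real.pi))⁻¹ := by positivity
  -- the key comparison as a statement about f
  have hkey : ∀ w : ℝ, w^2 ≠ (2*m:ℕ) →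
      w^(2*m) * phi w < (Real.sqrt (2*m:ℕ))^(2*m) * phi (Real.sqrt (2*m:ℕ)) := by
    intro w hw
    rw [f_eq, f_eq, hsq]
    apply mul_lt_mul_of_pos_left _ hc
    have := key m hm (t := w^2) (by positivity) (by push_cast at hw ⊢; exact hw)
    push_cast
    convert this using 3
  have hfeq : ∀ w : ℝ, w^2 = (2*m:ℕ) →
      w^(2*m) * phi w = (Real.sqrt (2*m:ℕ))^(2*m) * phi (Real.sqrt (2*m:ℕ)) := by
    intro w hw
    rw [f_eq, f_eq, hsq, hw]
  constructor
  · ext z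
    simp only [Set.mem_setOf_eq, Set.mem_insert_iff, Set.mem_singleton_iff]
    have hd : HasDerivAt (fun w : ℝ => w ^ (2*m) * phi w)
        (((2*m : ℕ) * z ^ (2*m-1)) * phi z + z ^ (2*m) * (-z * phi z)) z :=
      (hasDerivAt_pow (2*m) z).mul (phi_hasDeriv z)
    rw [hd.deriv]
    obtain ⟨p, hp⟩ : ∃ p, 2*m = p + 1 := ⟨2*m - 1, by omega⟩
    have hp1 : 1 ≤ p := by omega
    rw [hp]
    have factored : ((p+1 : ℕ) : ℝ) * z ^ ((p+1)-1) * phi z + z ^ (p+1) * (-z * phi z)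
        = z ^ p * (((p+1:ℕ):ℝ) - z^2) * phi z := by
      simp only [Nat.add_sub_cancel]
      push_cast
      ring
    rw [factored]
    rw [mul_eq_zero, mul_eq_zero]
    have hphine := (phi_pos z).ne'
    constructor
    · rintro ((h | h) | h)
      · right; left; exact pow_eq_zero_iff (by omega) |>.mp h
      · have hz2 : z^2 = ((p+1:ℕ):ℝ) := by linarith
        have : z^2 = (Real.sqrt (p+1:ℕ))^2 := by
          rw [Real.sq_sqrt (by positivity)]
          exact hz2
        rcases sq_eq_sq_iff_eq_or_eq_neg.mp this with h | h
        · right; right; exact h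
        · left; exact h
      · exact absurd h hphine
    · rintro (h | h | h)
      · left; right
        subst h
        rw [neg_sq, Real.sq_sqrt (Nat.cast_nonneg _), sub_self]
      · left; left; subst h; exact zero_pow (by omega)
      · left; right
        subst h
        rw [Real.sq_sqrt (Nat.cast_nonneg _), sub_self]
  · ext z
    simp only [Set.mem_setOf_eq, Set.mem_insert_iff, Set.mem_singleton_iff]
    constructor
    · intro hz
      by_cases hz2 : z^2 = (2*m:ℕ)
      · have : z = Real.sqrt (2*m:ℕ) ∨ z = -Real.sqrt (2*m:ℕ) := by
          have : z^2 = (Real.sqrt (2*m:ℕ))^2 := by rw [hsq]; exact hz2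
          exact sq_eq_sq_iff_eq_or_eq_neg.mp this
        exact this
      · exfalso
        have h1 := hkey z hz2
        have h2 := hz (Real.sqrt (2*m:ℕ))
        linarith
    · intro hz
      have hzsq : z^2 = (2*m:ℕ) := by
        rcases hz with h | h
        · subst h; exact hsq
        · subst h; rw [neg_sq]; exact hsq
      intro w
      have hez := hfeq z hzsq
      by_cases hw : w^2 = (2*m:ℕ)
      · rw [hfeq w hw, hez]
      · have := hkey w hw
        linarith [hkey w hw, hez.ge]
end
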